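/- W-sequence recurrence for the compression of a double almost-Riordan array: Suppose W̃ ∈ K[[t]] satisfies b₀·f₂·(b − b₀) = b₂·t²·b·f₂ + t³·g·(b₀·(W̃∘(f₁f₂)) − b₂), where b₂ = [t²]b, and set w_j := [t^j]W̃ (so w₀ = b₂/b₀). Let d̂_{n,k} := d_{2n−k,k} for 0 ≤ k ≤ n and d̂_{n,k} := 0 for k > n. Then for all n ≥ 1, d̂_{n,0} = w₀·d̂_{n−1,0} + w₁·d̂_{n,2} + w₂·d̂_{n+1,4} + ⋯ = Σ_{j≥0} w_j·d̂_{n+j−1, 2j}, where the sum has only finitely many nonzero terms. -/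

import Mathlib

open PowerSeries

variable {K : Type*} [Field K]

/-- Formal substitution `U ∘ h` of a power series `h` (intended with `h(0) = 0`)
into a power series `U`:  `[tⁿ](U∘h) = Σ_{j≤n} ([tʲ]U)·[tⁿ](hʲ)`. -/
noncomputable def psComp (U h : PowerSeries K) : PowerSeries K :=
  PowerSeries.mk fun n => ∑ j ∈ Finset.range (n + 1), coeff j U * coeff n (h ^ j)

/-- The `(n,k)` entry of the double almost-Riordan array `(b | g ; f₁, f₂)`:
column 0 is `b`, column `2ℓ+1` is `t·g·(f₁f₂)^ℓ`, column `2ℓ+2` is `t·g·f₁·(f₁f₂)^ℓ`. -/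
noncomputable def dar (b g f₁ f₂ : PowerSeries K) (n k : ℕ) : K :=
  if k = 0 then coeff n b
  else if k % 2 = 1 then coeff n (X * g * (f₁ * f₂) ^ ((k - 1) / 2))
  else coeff n (X * g * f₁ * (f₁ * f₂) ^ ((k - 2) / 2))

/-- The compression of the double almost-Riordan array: `d̂_{n,k} = d_{2n−k,k}` for `k ≤ n`,
and `0` otherwise. -/
noncomputable def darHat (b g f₁ f₂ : PowerSeries K) (n k : ℕ) : K :=
  if k ≤ n then dar b g f₁ f₂ (2 * n - k) k else 0

/-!
Write `W = w₀ + t·V`. Then `W∘(f₁f₂) = w₀ + f₁f₂·(V∘(f₁f₂))`, and comparing coefficients of `t³`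
gives `b₂ = b₀w₀`. Substituting both into the defining relation of `W` and cancelling `b₀f₂` leaves `b = b₀ + t²·(w₀·b + t·g·f₁·V∘(f₁f₂))`.
The coefficient of `t^{2n}` of this identity is the recurrence: every entry `d̂_{n+j−1,2j}`
equals `d_{2n−2,2j}`, which for `j ≥ 1` is `[t^{2n−2}] t·g·f₁·(f₁f₂)^{j−1}`, and lower
triangularity of `D` makes all terms with `j ≥ n` vanish.
-/

theorem coeff_pow_eq_zero_of_X_dvd {R : Type*} [CommSemiring R] {h : R⟦X⟧} (hh : X ∣ h)
    {j k : ℕ} (hk : k < j) : coeff k (h ^ j) = 0 := by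
  obtain ⟨u, rfl⟩ := hh
  rw [mul_pow, coeff_X_pow_mul', if_neg (by omega)]

theorem constantCoeff_psComp (U h : K⟦X⟧) : constantCoeff (psComp U h) = constantCoeff U := by
  rw [← coeff_zero_eq_constantCoeff_apply, ← coeff_zero_eq_constantCoeff_apply]
  simp [psComp]

theorem psComp_eq_subst (U : K⟦X⟧) {h : K⟦X⟧} (hh : constantCoeff h = 0) :
    psComp U h = U.subst h := by
  ext n
  rw [coeff_subst' (HasSubst.of_constantCoeff_zero' hh), finsum_eq_sum_of_support_subset
    (s := Finset.range (n + 1))]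
  · simp [psComp]
  · refine Function.support_subset_iff'.mpr fun j hj => ?_
    simp only [Finset.coe_range, Set.mem_Iio, not_lt] at hj
    rw [coeff_pow_eq_zero_of_X_dvd (X_dvd_iff.mpr hh) (by omega), smul_zero]

theorem psComp_eq_C_add_mul_psComp_shift (U : K⟦X⟧) {h : K⟦X⟧} (hh : constantCoeff h = 0) :
    psComp U h = C (constantCoeff U) + h * psComp (mk fun n => coeff (n + 1) U) h := by
  have hs := HasSubst.of_constantCoeff_zero' hh
  rw [psComp_eq_subst _ hh, psComp_eq_subst _ hh]
  conv_lhs => rw [eq_X_mul_shift_add_const U]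
  rw [subst_add hs, subst_mul hs, subst_X hs, subst_C, add_comm]
  rfl

theorem X_pow_dvd_psComp_sub_sum (U : K⟦X⟧) {h : K⟦X⟧} (hh : X ∣ h) (N : ℕ) :
    X ^ N ∣ psComp U h - ∑ j ∈ Finset.range N, C (coeff j U) * h ^ j := by
  refine X_pow_dvd_iff.mpr fun k hk => ?_
  simp only [psComp, map_sub, coeff_mk, map_sum, coeff_C_mul, sub_eq_zero]
  refine Finset.sum_subset (Finset.range_subset_range.mpr (by omega)) fun j _ hj => ?_
  rw [coeff_pow_eq_zero_of_X_dvd hh (by simpa using hj), mul_zero]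

theorem coeff_mul_psComp (F U : K⟦X⟧) {h : K⟦X⟧} (hh : X ∣ h) (n : ℕ) :
    coeff n (F * psComp U h) = ∑ j ∈ Finset.range (n + 1), coeff j U * coeff n (F * h ^ j) := by
  obtain ⟨R, hR⟩ := X_pow_dvd_psComp_sub_sum U hh (n + 1)
  rw [sub_eq_iff_eq_add] at hR
  rw [hR, mul_add, map_add, mul_left_comm, coeff_X_pow_mul', if_neg (by omega), zero_add,
    Finset.mul_sum, map_sum]
  simp only [mul_left_comm F, coeff_C_mul]

theorem coeff_add_two_of_eq_C_add_X_sq_mul {b F V h : K⟦X⟧} {c a : K} (hh : X ∣ h)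
    (hb : b = C c + X ^ 2 * (C a * b + F * psComp V h)) (n : ℕ) :
    coeff (n + 2) b = a * coeff n b +
      ∑ j ∈ Finset.range (n + 1), coeff j V * coeff n (F * h ^ j) := by
  conv_lhs => rw [hb]
  rw [map_add, coeff_C, if_neg (by omega), zero_add, coeff_X_pow_mul, map_add, coeff_C_mul,
    coeff_mul_psComp _ _ hh]

section DoubleAlmostRiordan

variable {b g f₁ f₂ W : K⟦X⟧}

theorem dar_eq_zero_of_lt (hf₁ : X ∣ f₁) (hf₂ : X ∣ f₂) {n k : ℕ} (hnk : n < k) :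
    dar b g f₁ f₂ n k = 0 := by
  obtain ⟨u₁, rfl⟩ := hf₁
  obtain ⟨u₂, rfl⟩ := hf₂
  have hprod : X * u₁ * (X * u₂) = X ^ 2 * (u₁ * u₂) := by ring
  unfold dar
  split_ifs with hk0 hodd
  · omega
  · obtain ⟨ℓ, rfl⟩ : ∃ ℓ, k = 2 * ℓ + 1 := ⟨(k - 1) / 2, by omega⟩
    rw [show (2 * ℓ + 1 - 1) / 2 = ℓ by omega, hprod, mul_pow, ← pow_mul,
      show X * g * (X ^ (2 * ℓ) * (u₁ * u₂) ^ ℓ) = X ^ (2 * ℓ + 1) * (g * (u₁ * u₂) ^ ℓ) by ring,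
      coeff_X_pow_mul', if_neg (by omega)]
  · obtain ⟨ℓ, rfl⟩ : ∃ ℓ, k = 2 * ℓ + 2 := ⟨(k - 2) / 2, by omega⟩
    rw [show (2 * ℓ + 2 - 2) / 2 = ℓ by omega, hprod, mul_pow, ← pow_mul,
      show X * g * (X * u₁) * (X ^ (2 * ℓ) * (u₁ * u₂) ^ ℓ) =
        X ^ (2 * ℓ + 2) * (g * u₁ * (u₁ * u₂) ^ ℓ) by ring,
      coeff_X_pow_mul', if_neg (by omega)]

theorem darHat_eq_dar (hf₁ : X ∣ f₁) (hf₂ : X ∣ f₂) (n k : ℕ) :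
    darHat b g f₁ f₂ n k = dar b g f₁ f₂ (2 * n - k) k := by
  unfold darHat
  split_ifs with hk
  · rfl
  · exact (dar_eq_zero_of_lt hf₁ hf₂ (by omega)).symm

theorem dar_zero_right (n : ℕ) : dar b g f₁ f₂ n 0 = coeff n b := rfl

theorem dar_two_mul_add_two (n j : ℕ) :
    dar b g f₁ f₂ n (2 * j + 2) = coeff n (X * g * f₁ * (f₁ * f₂) ^ j) := by
  rw [dar, if_neg (by omega), if_neg (by omega), show (2 * j + 2 - 2) / 2 = j by omega]

theorem finsum_coeff_mul_dar (hf₁ : X ∣ f₁) (hf₂ : X ∣ f₂) (n : ℕ) :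
    ∑ᶠ j, coeff j W * dar b g f₁ f₂ n (2 * j) =
      constantCoeff W * coeff n b + ∑ j ∈ Finset.range (n + 1),
        coeff (j + 1) W * coeff n (X * g * f₁ * (f₁ * f₂) ^ j) := by
  rw [finsum_eq_sum_of_support_subset (s := Finset.range (n + 2)), Finset.sum_range_succ',
    add_comm]
  · simp only [mul_zero, mul_add, mul_one, dar_zero_right, dar_two_mul_add_two,
      coeff_zero_eq_constantCoeff_apply]
  · refine Function.support_subset_iff'.mpr fun j hj => ?_
    simp only [Finset.coe_range, Set.mem_Iio, not_lt] at hj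
    rw [dar_eq_zero_of_lt hf₁ hf₂ (by omega), mul_zero]

theorem constantCoeff_mul_constantCoeff_eq_coeff_two (hf₂ : X ∣ f₂) (hf₂2 : coeff 2 f₂ = 0)
    (hg0 : constantCoeff g ≠ 0)
    (hW : C (constantCoeff b) * f₂ * (b - C (constantCoeff b)) =
        C (coeff 2 b) * X ^ 2 * b * f₂ +
          X ^ 3 * g * (C (constantCoeff b) * psComp W (f₁ * f₂) - C (coeff 2 b))) :
    constantCoeff b * constantCoeff W = coeff 2 b := by
  have h3 := congrArg (coeff 3) hW
  have hf₂0 : coeff 0 f₂ = 0 := by simpa using X_dvd_iff.mp hf₂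
  simp [coeff_mul, Finset.Nat.sum_antidiagonal_eq_sum_range_succ_mk, Finset.sum_range_succ,
    hf₂0, hf₂2, coeff_C, constantCoeff_psComp] at h3
  have hg : constantCoeff g * (constantCoeff b * constantCoeff W - coeff 2 b) = 0 := by
    linear_combination -h3
  exact sub_eq_zero.mp ((mul_eq_zero.mp hg).resolve_left hg0)

theorem eq_C_add_X_sq_mul_of_W (hf₂ : X ∣ f₂) (hf₂2 : coeff 2 f₂ = 0) (hf₂0 : f₂ ≠ 0)
    (hb0 : constantCoeff b ≠ 0) (hg0 : constantCoeff g ≠ 0)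
    (hW : C (constantCoeff b) * f₂ * (b - C (constantCoeff b)) =
        C (coeff 2 b) * X ^ 2 * b * f₂ +
          X ^ 3 * g * (C (constantCoeff b) * psComp W (f₁ * f₂) - C (coeff 2 b))) :
    b = C (constantCoeff b) + X ^ 2 * (C (constantCoeff W) * b +
      X * g * f₁ * psComp (mk fun n => coeff (n + 1) W) (f₁ * f₂)) := by
  have hW₀ : C (coeff 2 b) = C (constantCoeff b) * C (constantCoeff W) := by
    rw [← map_mul, constantCoeff_mul_constantCoeff_eq_coeff_two hf₂ hf₂2 hg0 hW]
  have hh : constantCoeff (f₁ * f₂) = 0 := by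
    rw [map_mul, X_dvd_iff.mp hf₂, mul_zero]
  rw [psComp_eq_C_add_mul_psComp_shift W hh, hW₀] at hW
  have hb₀f₂ : C (constantCoeff b) * f₂ ≠ 0 := mul_ne_zero (by simpa using hb0) hf₂0
  refine sub_eq_zero.mp ((mul_eq_zero.mp ?_).resolve_left hb₀f₂)
  linear_combination hW

end DoubleAlmostRiordan

theorem darHat_W_seq_general
    (b g f₁ f₂ : PowerSeries K)
    (hb0 : constantCoeff b ≠ 0)
    (hg0 : constantCoeff g ≠ 0)
    (hf₁o : ∀ k, coeff (2 * k) f₁ = 0)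
    (hf₂o : ∀ k, coeff (2 * k) f₂ = 0)
    (hf₂1 : coeff 1 f₂ ≠ 0)
    (W : PowerSeries K)
    (hW : C (constantCoeff b) * f₂ * (b - C (constantCoeff b)) =
        C (coeff 2 b) * X ^ 2 * b * f₂ +
          X ^ 3 * g * (C (constantCoeff b) * psComp W (f₁ * f₂) - C (coeff 2 b))) :
    ∀ n : ℕ, 1 ≤ n →
      darHat b g f₁ f₂ n 0 =
        ∑ᶠ j : ℕ, coeff j W * darHat b g f₁ f₂ (n + j - 1) (2 * j) := by
  intro n hn
  obtain ⟨m, rfl⟩ := Nat.exists_eq_add_of_le' hn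
  have hX₁ : X ∣ f₁ := X_dvd_iff.mpr (by simpa using hf₁o 0)
  have hX₂ : X ∣ f₂ := X_dvd_iff.mpr (by simpa using hf₂o 0)
  have hf₂0 : f₂ ≠ 0 := fun h => hf₂1 (by rw [h, map_zero])
  have hb := eq_C_add_X_sq_mul_of_W hX₂ (hf₂o 1) hf₂0 hb0 hg0 hW
  have hrow : ∀ j, 2 * (m + 1 + j - 1) - 2 * j = 2 * m := by omega
  simp only [darHat_eq_dar hX₁ hX₂, hrow, finsum_coeff_mul_dar hX₁ hX₂]
  rw [dar_zero_right, Nat.mul_succ]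
  simpa using coeff_add_two_of_eq_C_add_X_sq_mul (dvd_mul_of_dvd_right hX₂ f₁) hb (2 * m)

/-- W-sequence recurrence for the compression of a double almost-Riordan array. -/
theorem darHat_W_seq
    (b g f₁ f₂ : PowerSeries K)
    (hbe : ∀ k, coeff (2 * k + 1) b = 0)
    (hge : ∀ k, coeff (2 * k + 1) g = 0)
    (hb0 : constantCoeff b ≠ 0)
    (hg0 : constantCoeff g ≠ 0)
    (hf₁o : ∀ k, coeff (2 * k) f₁ = 0)
    (hf₂o : ∀ k, coeff (2 * k) f₂ = 0)
    (hf₁1 : coeff 1 f₁ ≠ 0)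
    (hf₂1 : coeff 1 f₂ ≠ 0)
    (W : PowerSeries K)
    (hW : C (constantCoeff b) * f₂ * (b - C (constantCoeff b)) =
        C (coeff 2 b) * X ^ 2 * b * f₂ +
          X ^ 3 * g * (C (constantCoeff b) * psComp W (f₁ * f₂) - C (coeff 2 b))) :
    ∀ n : ℕ, 1 ≤ n →
      darHat b g f₁ f₂ n 0 =
        ∑ᶠ j : ℕ, coeff j W * darHat b g f₁ f₂ (n + j - 1) (2 * j) :=
  darHat_W_seq_general b g f₁ f₂ hb0 hg0 hf₁o hf₂o hf₂1 W hW
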